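/- There do not exist positive integers r, p, q, d such that q^2 = 2*r^2 + p^2 and d^2 = r^2 + p^2. -/

import Mathlib

/-!
Since `d⁴ - r⁴ = (d² - r²)(d² + r²) = p²q²`, such a box gives a solution of `x⁴ - y⁴ = z²` in
nonzero integers, and Fermat's descent rules these out: every solution yields one with smaller
`|x|`. Dividing by `gcd x y` makes `x, y` coprime. If `y` is odd, the primitive Pythagorean triple
`(y², z, x²)` is `(m² - n², 2mn, m² + n²)`, and `m⁴ - n⁴ = (xy)²` with `|m| < |x|`. If `y` is even,
the triple `(z, y², x²)` gives `y² = 2mn` with `m, n` coprime, so `{m, n} = {2a², b²}` and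
`b⁴ + 4a⁴ = x²`; writing the primitive triple `(b², 2a², x)` as `(s² - t², 2st, s² + t²)` forces
`s = e²`, `t = f²`, and then `e⁴ - f⁴ = b²` with `|e| ≤ s < |x|`.
-/

def FourthPowSubSq (x y z : ℤ) : Prop :=
  y ≠ 0 ∧ z ≠ 0 ∧ x ^ 4 - y ^ 4 = z ^ 2

theorem Int.exists_sq_of_isCoprime_of_mul_eq_sq {a b c : ℤ} (hab : IsCoprime a b) (ha : 0 ≤ a)
    (heq : a * b = c ^ 2) : ∃ e, a = e ^ 2 := by
  obtain ⟨e, he | he⟩ := Int.sq_of_isCoprime hab heq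
  · exact ⟨e, he⟩
  · exact ⟨0, by nlinarith [sq_nonneg e]⟩

theorem Int.exists_sq_sq_of_isCoprime_of_mul_eq_sq {a b c : ℤ} (hab : IsCoprime a b)
    (ha : 0 ≤ a) (hb : 0 ≤ b) (heq : a * b = c ^ 2) : ∃ e f, a = e ^ 2 ∧ b = f ^ 2 := by
  obtain ⟨e, rfl⟩ := Int.exists_sq_of_isCoprime_of_mul_eq_sq hab ha heq
  obtain ⟨f, rfl⟩ := Int.exists_sq_of_isCoprime_of_mul_eq_sq hab.symm hb (by rw [mul_comm, heq])
  exact ⟨e, f, rfl, rfl⟩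

theorem Int.odd_of_isCoprime_of_even {a b : ℤ} (hab : IsCoprime a b) (ha : Even a) : Odd b := by
  refine Int.not_even_iff_odd.mp fun hb => ?_
  have := Int.isUnit_iff.mp (hab.isUnit_of_dvd' ha.two_dvd hb.two_dvd)
  omega

theorem Int.exists_eq_two_mul_sq_of_two_mul_mul_eq_sq {m n y : ℤ} (hmn : IsCoprime m n)
    (hm : 0 ≤ m) (hn : 0 ≤ n) (hm2 : Even m) (hy : 2 * m * n = y ^ 2) :
    ∃ a b, m = 2 * a ^ 2 ∧ n = b ^ 2 := by
  obtain ⟨u, rfl⟩ := hm2.two_dvd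
  obtain ⟨w, rfl⟩ : 2 ∣ y :=
    ((Int.even_pow (n := 2)).mp ⟨2 * u * n, by rw [← hy]; ring⟩).1.two_dvd
  obtain ⟨a, b, rfl, rfl⟩ := Int.exists_sq_sq_of_isCoprime_of_mul_eq_sq
    hmn.of_mul_left_right (by linarith) hn (by linarith : u * n = w ^ 2)
  exact ⟨a, b, rfl, rfl⟩

theorem exists_fourthPowSubSq_of_pow_four_add_four_mul_pow_four_eq_sq {a b x : ℤ} (ha : a ≠ 0)
    (hb : Odd b) (hab : IsCoprime (b ^ 2) (2 * a ^ 2)) (h : b ^ 4 + 4 * a ^ 4 = x ^ 2) :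
    ∃ e f, FourthPowSubSq e f b ∧ e.natAbs < x.natAbs := by
  have htriple : PythagoreanTriple (b ^ 2) (2 * a ^ 2) |x| := by
    unfold PythagoreanTriple; linear_combination h - abs_mul_abs_self x
  have ha4 : 0 < (a ^ 2) ^ 2 := by positivity
  have hx : 0 < |x| := abs_pos.mpr (by rintro rfl; nlinarith [sq_nonneg (b ^ 2)])
  obtain ⟨s, t, hb2, ha2, hx2, hgcd, -, hs⟩ := htriple.coprime_classification'
    (Int.isCoprime_iff_gcd_eq_one.mp hab) (Int.odd_iff.mp hb.pow) hx
  have hst : s * t = a ^ 2 := by linarith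
  have ht : 0 < t := pos_of_mul_pos_right (hst ▸ by positivity) hs
  obtain ⟨e, f, rfl, rfl⟩ := Int.exists_sq_sq_of_isCoprime_of_mul_eq_sq
    (Int.isCoprime_iff_gcd_eq_one.mpr hgcd) hs ht.le hst
  refine ⟨e, f, ⟨?_, ?_, ?_⟩, ?_⟩
  · rintro rfl; simp at ht
  · rintro rfl; simp at hb
  · linear_combination -hb2
  · rw [← Int.ofNat_lt, Int.natCast_natAbs x]
    calc (e.natAbs : ℤ) ≤ e ^ 2 := Int.natAbs_le_self_sq e
      _ ≤ (e ^ 2) ^ 2 := Int.le_self_sq _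
      _ < (e ^ 2) ^ 2 + (f ^ 2) ^ 2 := lt_add_of_pos_right _ (by positivity)
      _ = |x| := hx2.symm

theorem exists_fourthPowSubSq_of_two_mul_mul_eq_sq_of_sq_add_sq_eq_sq {m n x y : ℤ}
    (hmn : IsCoprime m n) (hm : 0 ≤ m) (hn : 0 ≤ n) (hm2 : Even m) (hy : y ≠ 0)
    (hprod : 2 * m * n = y ^ 2) (hsum : m ^ 2 + n ^ 2 = x ^ 2) :
    ∃ x' y' z', FourthPowSubSq x' y' z' ∧ x'.natAbs < x.natAbs := by
  have hn2 : Odd n := Int.odd_of_isCoprime_of_even hmn hm2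
  obtain ⟨a, b, rfl, rfl⟩ := Int.exists_eq_two_mul_sq_of_two_mul_mul_eq_sq hmn hm hn hm2 hprod
  have ha : a ≠ 0 := by rintro rfl; exact hy (by simpa using hprod.symm)
  have hb : Odd b := (Int.odd_pow.mp hn2).resolve_right two_ne_zero
  obtain ⟨e, f, he, hlt⟩ := exists_fourthPowSubSq_of_pow_four_add_four_mul_pow_four_eq_sq
    (x := x) ha hb hmn.symm (by linear_combination hsum)
  exact ⟨e, f, b, he, hlt⟩

namespace FourthPowSubSq

variable {x y z : ℤ}

theorem left_ne_zero (h : FourthPowSubSq x y z) : x ≠ 0 := by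
  rintro rfl
  obtain ⟨hy, -, h⟩ := h
  nlinarith [sq_nonneg z, pow_pos (sq_pos_of_ne_zero hy) 2]

theorem exists_lt_of_not_isCoprime (h : FourthPowSubSq x y z) (hxy : ¬IsCoprime x y) :
    ∃ x' y' z', FourthPowSubSq x' y' z' ∧ x'.natAbs < x.natAbs := by
  obtain ⟨hy, hz, h⟩ := h
  obtain ⟨g, x, y, hg, hgcd, rfl, rfl⟩ :=
    Int.exists_gcd_one' (Int.gcd_pos_of_ne_zero_left y (left_ne_zero ⟨hy, hz, h⟩))
  have hg1 : 1 < g := by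
    by_contra! hg1
    obtain rfl : g = 1 := by omega
    simp [Int.isCoprime_iff_gcd_eq_one, hgcd] at hxy
  obtain ⟨z, rfl⟩ : (g : ℤ) ^ 2 ∣ z := by
    refine (Int.pow_dvd_pow_iff two_ne_zero).mp ⟨x ^ 4 - y ^ 4, ?_⟩
    rw [← h]; ring
  have hg0 : (g : ℤ) ≠ 0 := by positivity
  have hx : x ≠ 0 := by rintro rfl; exact left_ne_zero ⟨hy, hz, h⟩ (zero_mul _)
  refine ⟨x, y, z, ⟨?_, ?_, ?_⟩, ?_⟩
  · rintro rfl; simp at hy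
  · rintro rfl; simp at hz
  · refine mul_left_cancel₀ (pow_ne_zero 4 hg0) ?_
    linear_combination h
  · rw [Int.natAbs_mul, Int.natAbs_natCast]
    have := Int.natAbs_pos.mpr hx
    nlinarith

theorem isCoprime_sq_left (h : FourthPowSubSq x y z) (hxy : IsCoprime x y) :
    IsCoprime (y ^ 2) z := by
  have : IsCoprime (y ^ 4) (x ^ 4 + -1 * y ^ 4) := hxy.symm.pow.add_mul_right_right (-1)
  rw [← IsCoprime.pow_iff two_pos two_pos, ← pow_mul, ← h.2.2]
  convert this using 1 <;> ring

theorem exists_lt_of_odd (h : FourthPowSubSq x y z) (hyz : IsCoprime (y ^ 2) z) (hy : Odd y) :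
    ∃ x' y' z', FourthPowSubSq x' y' z' ∧ x'.natAbs < x.natAbs := by
  have hx := h.left_ne_zero
  obtain ⟨hy0, hz, h⟩ := h
  have ht : PythagoreanTriple (y ^ 2) z (x ^ 2) := by
    unfold PythagoreanTriple; linear_combination -h
  obtain ⟨m, n, hy2, rfl, hx2, -, -, -⟩ := ht.coprime_classification'
    (Int.isCoprime_iff_gcd_eq_one.mp hyz) (Int.odd_iff.mp hy.pow) (by positivity)
  have hn : n ≠ 0 := by rintro rfl; simp at hz
  refine ⟨m, n, x * y, ⟨hn, mul_ne_zero hx hy0, ?_⟩, ?_⟩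
  · linear_combination (-x ^ 2) * hy2 - (m ^ 2 - n ^ 2) * hx2
  · rw [Int.natAbs_lt_iff_sq_lt]
    nlinarith [sq_pos_of_ne_zero hn]

theorem exists_lt_of_even (h : FourthPowSubSq x y z) (hyz : IsCoprime (y ^ 2) z) (hy : Even y) :
    ∃ x' y' z', FourthPowSubSq x' y' z' ∧ x'.natAbs < x.natAbs := by
  have hx := h.left_ne_zero
  obtain ⟨hy0, -, h⟩ := h
  have ht : PythagoreanTriple z (y ^ 2) (x ^ 2) := by
    unfold PythagoreanTriple; linear_combination -h
  have hz : Odd z := Int.odd_of_isCoprime_of_even hyz (hy.pow_of_ne_zero two_ne_zero)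
  obtain ⟨m, n, -, hy2, hx2, hmn, hparity, hm⟩ := ht.coprime_classification'
    (Int.isCoprime_iff_gcd_eq_one.mp hyz.symm) (Int.odd_iff.mp hz) (by positivity)
  have hmn' := Int.isCoprime_iff_gcd_eq_one.mpr hmn
  have hn : 0 ≤ n := (pos_of_mul_pos_right (by nlinarith [sq_pos_of_ne_zero hy0]) hm).le
  rcases hparity with ⟨hm2, -⟩ | ⟨-, hn2⟩
  · exact exists_fourthPowSubSq_of_two_mul_mul_eq_sq_of_sq_add_sq_eq_sq hmn' hm hn
      (Int.even_iff.mpr hm2) hy0 hy2.symm hx2.symm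
  · exact exists_fourthPowSubSq_of_two_mul_mul_eq_sq_of_sq_add_sq_eq_sq hmn'.symm hn hm
      (Int.even_iff.mpr hn2) hy0 (by linear_combination -hy2) (by linear_combination -hx2)

theorem exists_lt (h : FourthPowSubSq x y z) :
    ∃ x' y' z', FourthPowSubSq x' y' z' ∧ x'.natAbs < x.natAbs := by
  by_cases hxy : IsCoprime x y
  · rcases Int.even_or_odd y with hy | hy
    · exact h.exists_lt_of_even (h.isCoprime_sq_left hxy) hy
    · exact h.exists_lt_of_odd (h.isCoprime_sq_left hxy) hy
  · exact h.exists_lt_of_not_isCoprime hxy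

end FourthPowSubSq

theorem not_fourthPowSubSq (x y z : ℤ) : ¬FourthPowSubSq x y z := fun h =>
  let ⟨x', y', z', h', _⟩ := h.exists_lt
  not_fourthPowSubSq x' y' z' h'
termination_by x.natAbs

theorem stmt_3 : ¬ ∃ r p q d : ℕ, 0 < r ∧ 0 < p ∧ 0 < q ∧ 0 < d ∧
    q^2 = 2*r^2 + p^2 ∧ d^2 = r^2 + p^2 := by
  rintro ⟨r, p, q, d, hr, hp, hq, -, hq2, hd2⟩
  refine not_fourthPowSubSq d r (p * q) ⟨by positivity, by positivity, ?_⟩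
  have hq2 : (q : ℤ) ^ 2 = 2 * r ^ 2 + p ^ 2 := by exact_mod_cast hq2
  have hd2 : (d : ℤ) ^ 2 = r ^ 2 + p ^ 2 := by exact_mod_cast hd2
  linear_combination (d ^ 2 + r ^ 2 + p ^ 2 : ℤ) * hd2 - p ^ 2 * hq2
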